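/- arXiv:0709.0482 — 4 statements merged into one kernel-verified Lean document; each statement's English description precedes it below -/
import Mathlib

section
/- Let m ≥ 3, ζ = exp(2πi/m), and let 1 ≤ i < m/2 be an integer. Then for every complex number q with q^m ≠ 1 and q^2 ≠ 1, we have ((q^m − 1)(q^2 − 1)/(2m)) · Σ_{k=0}^{m−1} (ζ^{ik} + ζ^{−ik}) / ((q − ζ^k)(q − ζ^{−k})) = q^i + q^{m−i}. (This computes the fake degree of the two-dimensional character χ_i of the dihedral group I_2(m): the reflections contribute 0 to the defining sum since χ_i vanishes on them.) -/
open Complex Finset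

/-!
For `z = ζ ^ k` the summand is `z (z ^ i + z ^ (m - i)) / ((q - z) (q z - 1))`. Partial fractions
in `z` and the expansions of `1 / (q - z)` and `q / (q z - 1)` as geometric sums of length `m`
(exact because `z ^ m = 1`) write it as `z ^ (i + 1) + z ^ (m - i + 1)` times a polynomial in `z`
of degree `< m`, over `(q ^ 2 - 1) (q ^ m - 1)`. Summing over the `m`-th roots of unity kills every
monomial whose exponent is not divisible by `m`, which leaves exactly one coefficient per term.
-/

theorem IsPrimitiveRoot.sum_range_pow_pow {R : Type*} [CommRing R] [IsDomain R] {ζ : R} {m : ℕ}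
    (hζ : IsPrimitiveRoot ζ m) (c : ℕ) :
    ∑ k ∈ range m, (ζ ^ k) ^ c = if m ∣ c then (m : R) else 0 := by
  simp_rw [← pow_mul, mul_comm _ c, pow_mul]
  split_ifs with h
  · simp [(hζ.pow_eq_one_iff_dvd c).2 h]
  · have hne : ζ ^ c - 1 ≠ 0 := sub_ne_zero.2 fun h1 => h ((hζ.pow_eq_one_iff_dvd c).1 h1)
    have hgeom := geom_sum_mul (ζ ^ c) m
    rw [← pow_mul, mul_comm c m, pow_mul, hζ.pow_eq_one, one_pow, sub_self] at hgeom
    exact (mul_eq_zero.1 hgeom).resolve_right hne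

theorem Finset.sum_range_ite_dvd_add {M : Type*} [AddCommMonoid M] {m a : ℕ} (ha : 0 < a)
    (ham : a ≤ m) (f : ℕ → M) :
    ∑ j ∈ range m, (if m ∣ a + j then f j else 0) = f (m - a) := by
  have hdvd : ∀ j ∈ range m, (m ∣ a + j ↔ m - a = j) := by
    intro j hj
    rw [mem_range] at hj
    constructor
    · rintro ⟨c, hc⟩
      rcases c with _ | _ | c
      all_goals first | omega | nlinarith
    · rintro rfl
      exact ⟨1, by omega⟩
  rw [sum_congr rfl fun j hj => if_congr (hdvd j hj) rfl rfl, sum_ite_eq, if_pos (by simp; omega)]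

theorem IsPrimitiveRoot.sum_range_pow_mul_sum {R : Type*} [CommRing R] [IsDomain R] {ζ : R}
    {m a : ℕ} (hζ : IsPrimitiveRoot ζ m) (ha : 0 < a) (ham : a ≤ m) (f : ℕ → R) :
    ∑ k ∈ range m, (ζ ^ k) ^ a * ∑ j ∈ range m, f j * (ζ ^ k) ^ j = m * f (m - a) := by
  calc ∑ k ∈ range m, (ζ ^ k) ^ a * ∑ j ∈ range m, f j * (ζ ^ k) ^ j
      = ∑ j ∈ range m, f j * ∑ k ∈ range m, (ζ ^ k) ^ (a + j) := by
        simp_rw [mul_sum, pow_add]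
        rw [sum_comm]
        exact sum_congr rfl fun _ _ => sum_congr rfl fun _ _ => by ring
    _ = ∑ j ∈ range m, (if m ∣ a + j then m * f j else 0) := by
        simp_rw [hζ.sum_range_pow_pow, mul_ite, mul_zero, mul_comm]
    _ = m * f (m - a) := sum_range_ite_dvd_add ha ham _

section GeomExpansion

variable {K : Type*} [Field K] {m : ℕ} {q z : K}

theorem one_div_sub_eq_geom_sum (hz : z ^ m = 1) (hq : q ^ m ≠ 1) :
    1 / (q - z) = (∑ j ∈ range m, q ^ (m - 1 - j) * z ^ j) / (q ^ m - 1) := by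
  have hgeom : (∑ j ∈ range m, z ^ j * q ^ (m - 1 - j)) * (q - z) = q ^ m - 1 := by
    rw [← geom_sum₂_comm, geom_sum₂_mul, hz]
  have hqz : q - z ≠ 0 := sub_ne_zero.2 fun h => hq (h ▸ hz)
  rw [div_eq_div_iff hqz (sub_ne_zero.2 hq), ← hgeom]
  simp_rw [mul_comm (z ^ _)]
  ring

theorem div_mul_sub_one_eq_geom_sum (hz : z ^ m = 1) (hq : q ^ m ≠ 1) :
    q / (q * z - 1) = (∑ j ∈ range m, q ^ (j + 1) * z ^ j) / (q ^ m - 1) := by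
  have hqzm : (q * z) ^ m = q ^ m := by rw [mul_pow, hz, mul_one]
  have hgeom : (∑ j ∈ range m, (q * z) ^ j) * (q * z - 1) = q ^ m - 1 := by
    rw [geom_sum_mul, hqzm]
  have hqz : q * z - 1 ≠ 0 := fun h => hq (by rw [← hqzm, sub_eq_zero.1 h, one_pow])
  rw [div_eq_div_iff hqz (sub_ne_zero.2 hq), ← hgeom, sum_mul, sum_mul, mul_sum]
  exact sum_congr rfl fun _ _ => by ring

theorem one_div_sub_mul_sub_inv (hz : z ≠ 0) (hqz : q - z ≠ 0) (hqz' : q * z - 1 ≠ 0)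
    (hq : q ^ 2 ≠ 1) :
    1 / ((q - z) * (q - z⁻¹)) = z / (q ^ 2 - 1) * (1 / (q - z) + q / (q * z - 1)) := by
  have hq' : q ^ 2 - 1 ≠ 0 := sub_ne_zero.2 hq
  have hqz'' : q - z⁻¹ ≠ 0 := by
    rw [sub_ne_zero]; rintro rfl; exact hqz' (by field_simp; ring)
  field_simp
  ring

theorem one_div_sub_mul_sub_inv_eq_geom_sum (hm : m ≠ 0) (hz : z ^ m = 1) (hq : q ^ m ≠ 1)
    (hq2 : q ^ 2 ≠ 1) :
    1 / ((q - z) * (q - z⁻¹)) =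
      z * (∑ j ∈ range m, (q ^ (m - 1 - j) + q ^ (j + 1)) * z ^ j) / ((q ^ 2 - 1) * (q ^ m - 1)) := by
  have hz0 : z ≠ 0 := by rintro rfl; simp [zero_pow hm] at hz
  have hqz : q - z ≠ 0 := sub_ne_zero.2 fun h => hq (h ▸ hz)
  have hqzm : (q * z) ^ m = q ^ m := by rw [mul_pow, hz, mul_one]
  have hqz' : q * z - 1 ≠ 0 := fun h => hq (by rw [← hqzm, sub_eq_zero.1 h, one_pow])
  rw [one_div_sub_mul_sub_inv hz0 hqz hqz' hq2, one_div_sub_eq_geom_sum hz hq,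
    div_mul_sub_one_eq_geom_sum hz hq, ← add_div, ← sum_add_distrib, div_mul_div_comm]
  simp_rw [add_mul]

end GeomExpansion

theorem zpow_neg_natCast_mul_eq_pow_sub {G : Type*} [GroupWithZero G] {ζ : G} {m a : ℕ}
    (hζ : ζ ^ m = 1) (ha : a ≤ m) (k : ℕ) : ζ ^ (-(a * k : ℤ)) = (ζ ^ k) ^ (m - a) := by
  have hzm : (ζ ^ k) ^ m = 1 := by rw [pow_right_comm, hζ, one_pow]
  rw [zpow_neg, ← Nat.cast_mul, zpow_natCast, pow_mul', eq_comm]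
  refine eq_inv_of_mul_eq_one_left ?_
  rw [← pow_add, Nat.sub_add_cancel ha, hzm]

theorem fake_degree_chi_i_general (m i : ℕ) (hi : 1 ≤ i) (hi2 : 2 * i < m)
    (ζ : ℂ) (hζ : ζ = Complex.exp (2 * Real.pi * Complex.I / m))
    (q : ℂ) (hqm : q ^ m ≠ 1) (hq2 : q ^ 2 ≠ 1) :
    ((q ^ m - 1) * (q ^ 2 - 1) / (2 * m)) *
      ∑ k ∈ Finset.range m,
        (ζ ^ (i * k) + ζ ^ (-(i * k : ℤ))) / ((q - ζ ^ k) * (q - ζ ^ (-(k : ℤ)))) =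
    q ^ i + q ^ (m - i) := by
  have hprim : IsPrimitiveRoot ζ m := hζ ▸ Complex.isPrimitiveRoot_exp m (by omega)
  set S : ℂ → ℂ := fun z => ∑ j ∈ range m, (q ^ (m - 1 - j) + q ^ (j + 1)) * z ^ j
  have hterm : ∀ k ∈ range m,
      (ζ ^ (i * k) + ζ ^ (-(i * k : ℤ))) / ((q - ζ ^ k) * (q - ζ ^ (-(k : ℤ)))) =
      ((ζ ^ k) ^ (i + 1) * S (ζ ^ k) + (ζ ^ k) ^ (m - i + 1) * S (ζ ^ k)) /
        ((q ^ 2 - 1) * (q ^ m - 1)) := by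
    intro k _
    have hzm : (ζ ^ k) ^ m = 1 := by rw [pow_right_comm, hprim.pow_eq_one, one_pow]
    rw [zpow_neg_natCast_mul_eq_pow_sub hprim.pow_eq_one (by omega), zpow_neg, zpow_natCast,
      div_eq_mul_one_div, one_div_sub_mul_sub_inv_eq_geom_sum (by omega) hzm hqm hq2, pow_mul']
    ring
  rw [sum_congr rfl hterm, ← sum_div, sum_add_distrib,
    hprim.sum_range_pow_mul_sum (by omega) (by omega),
    hprim.sum_range_pow_mul_sum (by omega) (by omega),
    show m - 1 - (m - (i + 1)) = i by omega, show m - (i + 1) + 1 = m - i by omega,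
    show m - 1 - (m - (m - i + 1)) = m - i by omega, show m - (m - i + 1) + 1 = i by omega]
  have hm0 : (m : ℂ) ≠ 0 := Nat.cast_ne_zero.2 (by omega)
  have hqm' : q ^ m - 1 ≠ 0 := sub_ne_zero.2 hqm
  have hq2' : q ^ 2 - 1 ≠ 0 := sub_ne_zero.2 hq2
  field_simp
  ring

/-- The fake degree of the two-dimensional character `χ_i` of the dihedral group
`I₂(m)` equals `q^i + q^(m-i)`. -/
theorem fake_degree_chi_i (m i : ℕ) (hm : 3 ≤ m) (hi : 1 ≤ i) (hi2 : 2 * i < m)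
    (ζ : ℂ) (hζ : ζ = Complex.exp (2 * Real.pi * Complex.I / m))
    (q : ℂ) (hqm : q ^ m ≠ 1) (hq2 : q ^ 2 ≠ 1) :
    ((q ^ m - 1) * (q ^ 2 - 1) / (2 * m)) *
      ∑ k ∈ Finset.range m,
        (ζ ^ (i * k) + ζ ^ (-(i * k : ℤ))) / ((q - ζ ^ k) * (q - ζ ^ (-(k : ℤ)))) =
    q ^ i + q ^ (m - i) :=
  fake_degree_chi_i_general m i hi hi2 ζ hζ q hqm hq2
end

section
/- Let m ≥ 2 and let f be any complex-valued class function on the dihedral group W = I_2(m). Define R(f)(q) = ((q−1)^2 P_W(q)/(2m)) Σ_{w∈W} det(w) f(w)/det(q·id − w) as a rational function of q, where P_W(q) = (q^2−1)(q^m−1)/(q−1)^2. Then q^m · R(f)(q^{−1}) = R(ε·f)(q), where ε is the sign character (ε(w) = det(w)) and m is the number of reflections in W. -/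
open Complex Finset

/-- The fake degree `R(f)(q)` of a function `f` on the dihedral group of order `2m`,
acting on `ℂ²` with the rotations `r k` having eigenvalues `ζ^k, ζ^{-k}` and determinant `1`,
and the reflections `sr k` having characteristic polynomial `q² - 1` and determinant `-1`.
Here `(q-1)² P_W(q) = (q²-1)(q^m-1)`. -/
noncomputable def fakeDeg (m : ℕ) (ζ : ℂ) (f : DihedralGroup m → ℂ) (q : ℂ) : ℂ :=
  ((q ^ 2 - 1) * (q ^ m - 1) / (2 * m)) *
    ((∑ k ∈ Finset.range m,
        f (DihedralGroup.r (k : ZMod m)) / ((q - ζ ^ k) * (q - ζ ^ (-(k : ℤ))))) +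
      ∑ k ∈ Finset.range m, (-1) * f (DihedralGroup.sr (k : ZMod m)) / (q ^ 2 - 1))

/-- The sign character of the dihedral group: `det` of the reflection representation. -/
def dihSign {m : ℕ} : DihedralGroup m → ℂ
  | DihedralGroup.r _ => 1
  | DihedralGroup.sr _ => -1

/-!
The identity holds term by term. With `Q q = (q² - 1)(q^m - 1)` one has
`Q q⁻¹ = q⁻⁽ᵐ⁺²⁾ Q q`, and every characteristic polynomial satisfies
`det (q⁻¹ - w) = q⁻² det w det (q - w)`: for a reflection this is `q⁻² - 1 = -q⁻² (q² - 1)`,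
for a rotation it holds because its eigenvalues `a, a⁻¹` are swapped by `a ↦ a⁻¹`.
Since `det w = ±1`, the factors `q^m`, `q⁻⁽ᵐ⁺²⁾` and `q²` cancel and `det w` moves to the numerator.
-/

section Reciprocal

variable {K : Type*} [Field K] {q : K}

lemma inv_pow_sub_one (hq : q ≠ 0) (n : ℕ) : q⁻¹ ^ n - 1 = -(q⁻¹ ^ n * (q ^ n - 1)) := by
  rw [mul_sub, inv_pow, inv_mul_cancel₀ (pow_ne_zero n hq)]
  ring

lemma inv_sub_mul_inv_sub (hq : q ≠ 0) {a : K} (ha : a ≠ 0) :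
    (q⁻¹ - a) * (q⁻¹ - a⁻¹) = q⁻¹ ^ 2 * ((q - a) * (q - a⁻¹)) := by
  field_simp
  ring

/-- No hypothesis `c ≠ 0` is needed: when `c = 0` both sides are `0` by the convention `x / 0 = 0`. -/
lemma pow_mul_mul_div_eq_of_reciprocal (hq : q ≠ 0) {m : ℕ} {Q Q' c c' d x : K}
    (hd : d * d = 1) (hQ : Q' = q⁻¹ ^ (m + 2) * Q) (hc : c' = q⁻¹ ^ 2 * d * c) :
    q ^ m * (Q' * (x / c')) = Q * (d * x / c) := by
  have hd_inv : d⁻¹ = d := inv_eq_of_mul_eq_one_right hd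
  have hq_pow : q ^ m * q⁻¹ ^ (m + 2) * q ^ 2 = 1 := by
    rw [pow_add, inv_pow, inv_pow]
    field_simp
  subst hQ hc
  simp only [div_eq_mul_inv, mul_inv, inv_inv, inv_pow, hd_inv] at *
  linear_combination (Q * x * c⁻¹ * d) * hq_pow

end Reciprocal

theorem fake_degree_symmetry_general (m : ℕ)
    (ζ : ℂ) (hζ : ζ = Complex.exp (2 * Real.pi * Complex.I / m))
    (f : DihedralGroup m → ℂ)
    (q : ℂ) (hq0 : q ≠ 0) :
    q ^ m * fakeDeg m ζ f q⁻¹ = fakeDeg m ζ (fun w => dihSign w * f w) q := by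
  have hζ0 : ζ ≠ 0 := hζ ▸ Complex.exp_ne_zero _
  have hQ : (q⁻¹ ^ 2 - 1) * (q⁻¹ ^ m - 1) = q⁻¹ ^ (m + 2) * ((q ^ 2 - 1) * (q ^ m - 1)) := by
    rw [inv_pow_sub_one hq0, inv_pow_sub_one hq0]
    ring
  simp only [fakeDeg, dihSign]
  rw [div_mul_eq_mul_div, div_mul_eq_mul_div, mul_div_assoc']
  congr 1
  simp only [mul_add, mul_sum]
  congr 1
  · refine sum_congr rfl fun k _ => ?_
    simp only [zpow_neg, zpow_natCast]
    exact pow_mul_mul_div_eq_of_reciprocal hq0 (one_mul 1) hQ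
      (by rw [inv_sub_mul_inv_sub hq0 (pow_ne_zero k hζ0), mul_one])
  · refine sum_congr rfl fun k _ => pow_mul_mul_div_eq_of_reciprocal hq0 (by norm_num) hQ ?_
    rw [inv_pow_sub_one hq0]
    ring

/-- `q^{N*} R(f)(q⁻¹) = R(ε ⊗ f)(q)` for the dihedral group, where `N* = m` is the
number of reflections. -/
theorem fake_degree_symmetry (m : ℕ) (hm : 2 ≤ m)
    (ζ : ℂ) (hζ : ζ = Complex.exp (2 * Real.pi * Complex.I / m))
    (f : DihedralGroup m → ℂ) (hf : ∀ w v : DihedralGroup m, f (v * w * v⁻¹) = f w)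
    (q : ℂ) (hq0 : q ≠ 0) (hqm : q ^ m ≠ 1) (hq2 : q ^ 2 ≠ 1) :
    q ^ m * fakeDeg m ζ f q⁻¹ = fakeDeg m ζ (fun w => dihSign w * f w) q :=
  fake_degree_symmetry_general m ζ hζ f q hq0
end

section
/- Let K be a field, let n ≥ 1, and fix a partition of {1, …, n} into consecutive blocks. Suppose Ω is a symmetric invertible n×n matrix over K, and P₁, P₂ are block lower triangular matrices whose diagonal blocks are identity matrices, and Λ₁, Λ₂ are block diagonal matrices, such that P₁Λ₁P₁ᵀ = P₂Λ₂P₂ᵀ = Ω. Then P₁ = P₂ and Λ₁ = Λ₂. -/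
open Matrix Finset

section Aux
variable {K : Type*} [Field K] {n : ℕ} {β : Fin n → ℕ}

/-- product of block-lower-triangular with identity-diagonal-block matrices. -/
lemma green_mul_tri {A B : Matrix (Fin n) (Fin n) K}
    (hA : ∀ i j, β i < β j → A i j = 0) (hB : ∀ i j, β i < β j → B i j = 0)
    (i j : Fin n) (h : β i < β j) : (A * B) i j = 0 := by
  rw [Matrix.mul_apply]
  apply Finset.sum_eq_zero
  intro a _
  rcases lt_trichotomy (β a) (β j) with hc | hc | hc
  · rw [hB a j hc, mul_zero]
  · rw [hA i a (hc ▸ h), zero_mul]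
  · rw [hA i a (h.trans hc), zero_mul]

lemma green_mul_diag {A B : Matrix (Fin n) (Fin n) K}
    (hA : ∀ i j, β i < β j → A i j = 0) (hB : ∀ i j, β i < β j → B i j = 0)
    (hAd : ∀ i j, β i = β j → A i j = if i = j then 1 else 0)
    (hBd : ∀ i j, β i = β j → B i j = if i = j then 1 else 0)
    (i j : Fin n) (h : β i = β j) : (A * B) i j = if i = j then 1 else 0 := by
  rw [Matrix.mul_apply]
  rw [Finset.sum_eq_single j]
  · rw [hBd j j rfl, if_pos rfl, mul_one, hAd i j h]
  · intro a _ ha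
    rcases lt_trichotomy (β a) (β j) with hc | hc | hc
    · rw [hB a j hc, mul_zero]
    · rw [hBd a j hc, if_neg ha, mul_zero]
    · rw [hA i a (h ▸ hc), zero_mul]
  · intro hj; exact absurd (Finset.mem_univ j) hj

/-- the inverse of a block-lower-triangular matrix is block lower triangular. -/
lemma green_inv_tri {A : Matrix (Fin n) (Fin n) K}
    (hA : ∀ i j, β i < β j → A i j = 0) (hdet : A.det ≠ 0)
    (i j : Fin n) (h : β i < β j) : A⁻¹ i j = 0 := by
  haveI : Invertible A := A.invertibleOfIsUnitDet (isUnit_iff_ne_zero.mpr hdet)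
  have hBT : A.BlockTriangular (OrderDual.toDual ∘ β) := fun i j hij => hA i j hij
  exact Matrix.blockTriangular_inv_of_blockTriangular hBT h

lemma green_inv_diag {A : Matrix (Fin n) (Fin n) K}
    (hA : ∀ i j, β i < β j → A i j = 0)
    (hAd : ∀ i j, β i = β j → A i j = if i = j then 1 else 0) (hdet : A.det ≠ 0)
    (i j : Fin n) (h : β i = β j) : A⁻¹ i j = if i = j then 1 else 0 := by
  have hinv := green_inv_tri hA hdet
  have hmul : (A * A⁻¹) i j = (1 : Matrix (Fin n) (Fin n) K) i j := by
    rw [Matrix.mul_nonsing_inv A (isUnit_iff_ne_zero.mpr hdet)]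
  rw [Matrix.mul_apply] at hmul
  rw [Finset.sum_eq_single i] at hmul
  · rw [hAd i i rfl, if_pos rfl, one_mul] at hmul
    rw [hmul, Matrix.one_apply]
  · intro a _ ha
    rcases lt_trichotomy (β a) (β i) with hc | hc | hc
    · rw [hinv a j (h ▸ hc), mul_zero]
    · rw [hAd i a hc.symm, if_neg (fun e => ha e.symm), zero_mul]
    · rw [hA i a hc, zero_mul]
  · intro hj; exact absurd (Finset.mem_univ i) hj

end Aux

/-- Uniqueness of systems of Green functions (block LDLᵀ uniqueness): if `Ω` is a
symmetric invertible matrix over a field, `P₁, P₂` are block lower triangular with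
identity diagonal blocks, `Λ₁, Λ₂` are block diagonal, and
`P₁Λ₁P₁ᵀ = P₂Λ₂P₂ᵀ = Ω`, then `P₁ = P₂` and `Λ₁ = Λ₂`.
The consecutive blocks of `{1, …, n}` are encoded by a monotone map `β : Fin n → ℕ`;
the block of `i` precedes the block of `j` iff `β i < β j`. -/
theorem green_functions_unique (K : Type*) [Field K] (n : ℕ) (hn : 1 ≤ n)
    (β : Fin n → ℕ) (hβ : Monotone β)
    (Ω P₁ P₂ Λ₁ Λ₂ : Matrix (Fin n) (Fin n) K)
    (hΩsymm : Ω.IsSymm) (hΩinv : IsUnit Ω)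
    (hP₁diag : ∀ i j, β i = β j → P₁ i j = if i = j then 1 else 0)
    (hP₁tri : ∀ i j, β i < β j → P₁ i j = 0)
    (hP₂diag : ∀ i j, β i = β j → P₂ i j = if i = j then 1 else 0)
    (hP₂tri : ∀ i j, β i < β j → P₂ i j = 0)
    (hΛ₁ : ∀ i j, β i ≠ β j → Λ₁ i j = 0)
    (hΛ₂ : ∀ i j, β i ≠ β j → Λ₂ i j = 0)
    (h₁ : P₁ * Λ₁ * P₁.transpose = Ω)
    (h₂ : P₂ * Λ₂ * P₂.transpose = Ω) :
    P₁ = P₂ ∧ Λ₁ = Λ₂ := by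
  have hΩdet : Ω.det ≠ 0 := by
    have := (Matrix.isUnit_iff_isUnit_det Ω).mp hΩinv
    exact this.ne_zero
  -- determinants
  have hdet₁ : P₁.det * Λ₁.det * P₁.det ≠ 0 := by
    rw [show P₁.det * Λ₁.det * P₁.det = Ω.det by
      rw [← h₁, Matrix.det_mul, Matrix.det_mul, Matrix.det_transpose]]
    exact hΩdet
  have hdet₂ : P₂.det * Λ₂.det * P₂.det ≠ 0 := by
    rw [show P₂.det * Λ₂.det * P₂.det = Ω.det by
      rw [← h₂, Matrix.det_mul, Matrix.det_mul, Matrix.det_transpose]]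
    exact hΩdet
  have hP₂det : P₂.det ≠ 0 := fun e => hdet₂ (by simp [e])
  have hΛ₁det : Λ₁.det ≠ 0 := fun e => hdet₁ (by simp [e])
  have hP₂unit : IsUnit P₂.det := isUnit_iff_ne_zero.mpr hP₂det
  -- M := P₂⁻¹ * P₁
  set M : Matrix (Fin n) (Fin n) K := P₂⁻¹ * P₁ with hM
  have hPM : P₂ * M = P₁ := by
    rw [hM, ← Matrix.mul_assoc, Matrix.mul_nonsing_inv P₂ hP₂unit, Matrix.one_mul]
  -- structure of P₂⁻¹
  have hP₂invtri : ∀ i j, β i < β j → P₂⁻¹ i j = 0 := green_inv_tri hP₂tri hP₂det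
  have hP₂invdiag : ∀ i j, β i = β j → P₂⁻¹ i j = if i = j then 1 else 0 :=
    green_inv_diag hP₂tri hP₂diag hP₂det
  -- structure of M
  have hMtri : ∀ i j, β i < β j → M i j = 0 := green_mul_tri hP₂invtri hP₁tri
  have hMdiag : ∀ i j, β i = β j → M i j = if i = j then 1 else 0 :=
    green_mul_diag hP₂invtri hP₁tri hP₂invdiag hP₁diag
  have hMdet : M.det ≠ 0 := by
    rw [hM, Matrix.det_mul]
    have hP₁det : P₁.det ≠ 0 := fun e => hdet₁ (by rw [e, zero_mul, zero_mul])
    refine mul_ne_zero ?_ hP₁det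
    rw [Matrix.det_nonsing_inv, Ring.inverse_eq_inv']
    exact inv_ne_zero hP₂det
  have hMinvtri : ∀ i j, β i < β j → M⁻¹ i j = 0 := green_inv_tri hMtri hMdet
  -- M * Λ₁ * Mᵀ = Λ₂
  have hKey : M * Λ₁ * Mᵀ = Λ₂ := by
    have h3 : P₂ * (M * Λ₁ * Mᵀ) * P₂ᵀ = P₂ * Λ₂ * P₂ᵀ := by
      calc P₂ * (M * Λ₁ * Mᵀ) * P₂ᵀ = (P₂ * M) * Λ₁ * (P₂ * M)ᵀ := by
            simp only [Matrix.transpose_mul, Matrix.mul_assoc]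
        _ = P₁ * Λ₁ * P₁ᵀ := by rw [hPM]
        _ = P₂ * Λ₂ * P₂ᵀ := by rw [h₁, h₂]
    have h4 : ∀ X Y : Matrix (Fin n) (Fin n) K, P₂ * X * P₂ᵀ = P₂ * Y * P₂ᵀ → X = Y := by
      intro X Y hXY
      have hTdet : IsUnit P₂ᵀ.det := by rwa [Matrix.det_transpose]
      have e1 : ∀ X : Matrix (Fin n) (Fin n) K, P₂⁻¹ * (P₂ * X * P₂ᵀ) * (P₂ᵀ)⁻¹ = X := by
        intro X
        rw [Matrix.mul_assoc P₂ X, ← Matrix.mul_assoc P₂⁻¹,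
          Matrix.nonsing_inv_mul _ hP₂unit, Matrix.one_mul, Matrix.mul_assoc,
          Matrix.mul_nonsing_inv _ hTdet, Matrix.mul_one]
      rw [← e1 X, ← e1 Y, hXY]
    exact h4 _ _ h3
  -- W = M * Λ₁
  set W : Matrix (Fin n) (Fin n) K := M * Λ₁ with hW
  have hWalt : W = Λ₂ * (M⁻¹)ᵀ := by
    have hMunit : IsUnit Mᵀ.det := by rw [Matrix.det_transpose]; exact isUnit_iff_ne_zero.mpr hMdet
    rw [hW, Matrix.transpose_nonsing_inv]
    calc M * Λ₁ = (M * Λ₁ * Mᵀ) * (Mᵀ)⁻¹ := by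
          rw [Matrix.mul_assoc (M * Λ₁) Mᵀ (Mᵀ)⁻¹, Matrix.mul_nonsing_inv _ hMunit,
            Matrix.mul_one]
      _ = Λ₂ * (Mᵀ)⁻¹ := by rw [hKey]
  -- entrywise analysis of W
  have hWeq : ∀ i j, β i = β j → W i j = Λ₁ i j := by
    intro i j h
    rw [hW, Matrix.mul_apply, Finset.sum_eq_single i]
    · rw [hMdiag i i rfl, if_pos rfl, one_mul]
    · intro a _ ha
      rcases eq_or_ne (β a) (β i) with hc | hc
      · rw [hMdiag i a hc.symm, if_neg (fun e => ha e.symm), zero_mul]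
      · rcases lt_or_gt_of_ne hc with hlt | hgt
        · rw [hΛ₁ a j (fun e => hc (e.trans h.symm)), mul_zero]
        · rw [hMtri i a hgt, zero_mul]
    · intro hj; exact absurd (Finset.mem_univ i) hj
  have hWeq₂ : ∀ i j, β i = β j → W i j = Λ₂ i j := by
    intro i j h
    rw [hWalt, Matrix.mul_apply, Finset.sum_eq_single j]
    · rw [Matrix.transpose_apply, green_inv_diag hMtri hMdiag hMdet j j rfl,
        if_pos rfl, mul_one]
    · intro a _ ha
      rcases eq_or_ne (β a) (β i) with hc | hc
      · rw [Matrix.transpose_apply,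
          green_inv_diag hMtri hMdiag hMdet j a (h.symm.trans hc.symm),
          if_neg (fun e => ha e.symm), mul_zero]
      · rw [hΛ₂ i a (fun e => hc e.symm), zero_mul]
    · intro hj; exact absurd (Finset.mem_univ j) hj
  have hWlt : ∀ i j, β i < β j → W i j = 0 := green_mul_tri hMtri (fun i j h => hΛ₁ i j h.ne)
  have hWgt : ∀ i j, β j < β i → W i j = 0 := by
    intro i j h
    rw [hWalt, Matrix.mul_apply]
    apply Finset.sum_eq_zero
    intro a _
    rcases eq_or_ne (β a) (β i) with hc | hc
    · rw [Matrix.transpose_apply, hMinvtri j a (hc ▸ h), mul_zero]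
    · rw [hΛ₂ i a (fun e => hc e.symm), zero_mul]
  -- conclude Λ₁ = Λ₂
  have hΛeq : Λ₁ = Λ₂ := by
    ext i j
    rcases eq_or_ne (β i) (β j) with h | h
    · rw [← hWeq i j h, hWeq₂ i j h]
    · rw [hΛ₁ i j h, hΛ₂ i j h]
  -- W = Λ₁
  have hWΛ : W = Λ₁ := by
    ext i j
    rcases lt_trichotomy (β i) (β j) with h | h | h
    · rw [hWlt i j h, hΛ₁ i j h.ne]
    · exact hWeq i j h
    · rw [hWgt i j h, hΛ₁ i j h.ne']
  -- M = 1
  have hMone : M = 1 := by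
    have hΛunit : IsUnit Λ₁.det := isUnit_iff_ne_zero.mpr hΛ₁det
    have : M * Λ₁ = 1 * Λ₁ := by rw [Matrix.one_mul, ← hW, hWΛ]
    calc M = M * Λ₁ * Λ₁⁻¹ := by
          rw [Matrix.mul_assoc, Matrix.mul_nonsing_inv _ hΛunit, Matrix.mul_one]
      _ = 1 * Λ₁ * Λ₁⁻¹ := by rw [this]
      _ = 1 := by rw [Matrix.one_mul, Matrix.mul_nonsing_inv _ hΛunit]
  refine ⟨?_, hΛeq⟩
  rw [← hPM, hMone, Matrix.mul_one]
end

section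
/- Let m ≥ 3 be odd and set n = (m−1)/2. Index rows/columns by 0, 1, …, n, ε. Define the (n+2)×(n+2) symmetric matrix Ω over ℚ(q) by: Ω_{00} = q^{2m}; Ω_{0j} = q^{m+j} + q^{2m−j} for 1 ≤ j ≤ n; Ω_{ij} = q^{m+|i−j|} + q^{m+i+j} + q^{2m−i−j} + q^{2m−|i−j|} for 1 ≤ i, j ≤ n; Ω_{0ε} = q^{m}; Ω_{iε} = q^{m+i} + q^{2m−i}; Ω_{εε} = q^{2m}. Define P by: P_{00} = 1, P_{01} = 1, P_{0j} = 0 for 2 ≤ j ≤ n, P_{0ε} = 1; for 1 ≤ i ≤ n: P_{ii} = q, P_{ij} = 0 for j ≠ i with 1 ≤ j ≤ n, P_{iε} = q^{i} + q^{m−i}, and P_{i0} = 0; P_{ε,j} = 0 for j ≠ ε and P_{εε} = q^{m}. Define Λ block diagonal by: Λ_{00} = (q^{m}−1)(q^{m}−q^{m−2}); Λ_{ij} = q^{−2}(q^{m}−1)(q^{m−|i−j|} + q^{i+j}) for 1 ≤ i, j ≤ n; Λ_{εε} = 1; all other entries 0. Then P Λ Pᵀ = Ω. -/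
open LaurentPolynomial

/-- Entries of the matrix `Ω` for the dihedral group `I₂(m)`, `m` odd, with
`n = (m-1)/2`; rows/columns indexed by `0, 1, …, n, ε` where `ε` is index `n+1`. -/
noncomputable def dihOmega (m n i j : ℕ) : LaurentPolynomial ℤ :=
  if i = 0 ∧ j = 0 then T (2 * m)
  else if i = 0 ∧ j ≤ n then T ((m : ℤ) + j) + T (2 * m - j)
  else if j = 0 ∧ i ≤ n then T ((m : ℤ) + i) + T (2 * m - i)
  else if i ≤ n ∧ j ≤ n then
    T ((m : ℤ) + |(i : ℤ) - j|) + T ((m : ℤ) + i + j) + T (2 * m - i - j) +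
      T (2 * m - |(i : ℤ) - j|)
  else if i = 0 ∨ j = 0 then T (m : ℤ)
  else if i ≤ n then T ((m : ℤ) + i) + T (2 * m - i)
  else if j ≤ n then T ((m : ℤ) + j) + T (2 * m - j)
  else T (2 * m)

/-- Entries of the matrix `P` for `I₂(m)`, `m` odd, with classes
`C₀ = {χ₀} > C₁ = {χ₁, …, χ_n} > C_ε = {ε}`. -/
noncomputable def dihP (m n i j : ℕ) : LaurentPolynomial ℤ :=
  if i = 0 then (if j = 0 ∨ j = 1 ∨ j = n + 1 then 1 else 0)
  else if i ≤ n then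
    (if j = i then T 1 else if j = n + 1 then T (i : ℤ) + T ((m : ℤ) - i) else 0)
  else (if j = n + 1 then T (m : ℤ) else 0)

/-- Entries of the block diagonal matrix `Λ` for `I₂(m)`, `m` odd. -/
noncomputable def dihLambda (m n i j : ℕ) : LaurentPolynomial ℤ :=
  if i = 0 ∧ j = 0 then (T (m : ℤ) - 1) * (T (m : ℤ) - T ((m : ℤ) - 2))
  else if 1 ≤ i ∧ i ≤ n ∧ 1 ≤ j ∧ j ≤ n then
    T (-2) * (T (m : ℤ) - 1) * (T ((m : ℤ) - |(i : ℤ) - j|) + T ((i : ℤ) + j))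
  else if i = n + 1 ∧ j = n + 1 then 1
  else 0

/-!
Every row of `P` has at most three nonzero entries: row `0` is `e₀ + e₁ + e_ε`, a middle row `i`
is `q eᵢ + (qⁱ + q^{m-i}) e_ε` and row `ε` is `q^m e_ε`; and `Λ` is block diagonal with last row
and column `e_ε`. So `(P Λ Pᵀ)ᵢⱼ = Pᵢ ⬝ Λ Pⱼ` is a sum of at most nine entries of `Λ`, most of
them zero. The last row and column of both `P Λ Pᵀ` and `Ω` are `q^m` times the last column of
`P`; each of the remaining four kinds of entries is an identity between Laurent monomials. For
middle `i, j` it reads `q² Λᵢⱼ + (qⁱ + q^{m-i})(qʲ + q^{m-j}) = Ωᵢⱼ`, where the cross terms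
`q^{m ± (i-j)}` and the term `-q^{m-|i-j|}` of `q² Λᵢⱼ` combine to `q^{m+|i-j|}`.
-/

open Matrix

theorem Matrix.mul_mul_transpose_apply {ι R : Type*} [Fintype ι] [NonUnitalSemiring R]
    (A B : Matrix ι ι R) (i j : ι) : (A * B * Aᵀ) i j = A i ⬝ᵥ (B *ᵥ A j) := by
  rw [Matrix.mul_assoc, mul_apply']
  rfl

noncomputable def dihPMatrix (m n : ℕ) :
    Matrix (Fin (n + 2)) (Fin (n + 2)) (LaurentPolynomial ℤ) :=
  of fun i j => dihP m n i j

noncomputable def dihLambdaMatrix (m n : ℕ) :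
    Matrix (Fin (n + 2)) (Fin (n + 2)) (LaurentPolynomial ℤ) :=
  of fun i j => dihLambda m n i j

noncomputable def dihOmegaMatrix (m n : ℕ) :
    Matrix (Fin (n + 2)) (Fin (n + 2)) (LaurentPolynomial ℤ) :=
  of fun i j => dihOmega m n i j

section
variable (m : ℕ) {n : ℕ}

theorem dihPMatrix_row_zero (hn : 1 ≤ n) :
    dihPMatrix m n 0 = Pi.single 0 1 + Pi.single 1 1 + Pi.single (Fin.last (n + 1)) 1 := by
  funext k
  simp only [dihPMatrix, dihP, of_apply, Pi.add_apply, Pi.single_apply, Fin.ext_iff,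
    Fin.val_zero, Fin.val_one, Fin.val_last, if_true]
  split_ifs <;> first | omega | simp

theorem dihPMatrix_row_of_mid {i : Fin (n + 2)} (hi : 1 ≤ (i : ℕ)) (hin : (i : ℕ) ≤ n) :
    dihPMatrix m n i = Pi.single i (T 1) + Pi.single (Fin.last (n + 1)) (T i + T (m - i)) := by
  funext k
  simp only [dihPMatrix, dihP, of_apply, Pi.add_apply, Pi.single_apply, Fin.ext_iff,
    Fin.val_last, if_neg (show (i : ℕ) ≠ 0 by omega), if_pos hin]
  split_ifs <;> first | omega | simp

theorem dihPMatrix_row_last :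
    dihPMatrix m n (Fin.last (n + 1)) = Pi.single (Fin.last (n + 1)) (T m) := by
  funext k
  simp only [dihPMatrix, dihP, of_apply, Pi.single_apply, Fin.ext_iff, Fin.val_last,
    if_neg (show n + 1 ≠ 0 by omega), if_neg (show ¬n + 1 ≤ n by omega)]

theorem dihLambda_zero_zero :
    dihLambda m n 0 0 = (T (m : ℤ) - 1) * (T (m : ℤ) - T ((m : ℤ) - 2)) :=
  if_pos ⟨rfl, rfl⟩

theorem dihLambda_of_mid {a b : ℕ} (ha : 1 ≤ a) (han : a ≤ n) (hb : 1 ≤ b) (hbn : b ≤ n) :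
    dihLambda m n a b =
      T (-2) * (T (m : ℤ) - 1) * (T ((m : ℤ) - |(a : ℤ) - b|) + T ((a : ℤ) + b)) := by
  rw [dihLambda, if_neg (by omega), if_pos ⟨ha, han, hb, hbn⟩]

theorem dihLambda_last_last : dihLambda m n (n + 1) (n + 1) = 1 := by
  rw [dihLambda, if_neg (by omega), if_neg (by omega), if_pos ⟨rfl, rfl⟩]

theorem dihLambda_eq_zero_of_ne {a b : ℕ} (hab : a ≠ b)
    (h : a = 0 ∨ b = 0 ∨ a = n + 1 ∨ b = n + 1) : dihLambda m n a b = 0 := by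
  rw [dihLambda, if_neg (by omega), if_neg (by omega), if_neg (by omega)]

theorem dihLambdaMatrix_last_apply (k : Fin (n + 2)) :
    dihLambdaMatrix m n (Fin.last (n + 1)) k = if k = Fin.last (n + 1) then 1 else 0 := by
  split_ifs with hk
  · simp [hk, dihLambdaMatrix, dihLambda_last_last]
  · exact dihLambda_eq_zero_of_ne m (fun h => hk (Fin.ext h.symm)) (by rw [Fin.val_last]; omega)

theorem dihLambdaMatrix_apply_last (k : Fin (n + 2)) :
    dihLambdaMatrix m n k (Fin.last (n + 1)) = if k = Fin.last (n + 1) then 1 else 0 := by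
  split_ifs with hk
  · simp [hk, dihLambdaMatrix, dihLambda_last_last]
  · exact dihLambda_eq_zero_of_ne m (fun h => hk (Fin.ext h)) (by rw [Fin.val_last]; omega)

theorem dihLambdaMatrix_mulVec_apply_last (v : Fin (n + 2) → LaurentPolynomial ℤ) :
    (dihLambdaMatrix m n *ᵥ v) (Fin.last (n + 1)) = v (Fin.last (n + 1)) := by
  simp [mulVec, dotProduct, dihLambdaMatrix_last_apply]

theorem dihLambdaMatrix_mulVec_single_last (c : LaurentPolynomial ℤ) :
    dihLambdaMatrix m n *ᵥ Pi.single (Fin.last (n + 1)) c = Pi.single (Fin.last (n + 1)) c := by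
  funext k
  simp [mulVec, dotProduct_single, dihLambdaMatrix_apply_last, Pi.single_apply]

theorem dihOmega_last_left (j : ℕ) : dihOmega m n (n + 1) j = T m * dihP m n j (n + 1) := by
  have hn : ¬n + 1 ≤ n := by omega
  simp only [dihOmega, dihP, Nat.add_one_ne_zero, hn, false_and, and_false, false_or, or_true,
    ↓reduceIte]
  split_ifs <;> first | omega | simp only [mul_add, mul_one, ← T_add] <;> ring_nf

theorem dihOmega_last_right (i : ℕ) : dihOmega m n i (n + 1) = dihP m n i (n + 1) * T m := by
  have hn : ¬n + 1 ≤ n := by omega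
  simp only [dihOmega, dihP, Nat.add_one_ne_zero, hn, false_and, and_false, or_false, or_true,
    ↓reduceIte]
  split_ifs <;> first | omega | simp only [add_mul, one_mul, ← T_add] <;> ring_nf

theorem dihOmega_zero_zero : dihOmega m n 0 0 = T (2 * m) :=
  if_pos ⟨rfl, rfl⟩

theorem dihOmega_zero_of_mid {j : ℕ} (hj : 1 ≤ j) (hjn : j ≤ n) :
    dihOmega m n 0 j = T ((m : ℤ) + j) + T (2 * m - j) := by
  rw [dihOmega, if_neg (by omega), if_pos ⟨rfl, hjn⟩]

theorem dihOmega_of_mid_zero {i : ℕ} (hi : 1 ≤ i) (hin : i ≤ n) :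
    dihOmega m n i 0 = T ((m : ℤ) + i) + T (2 * m - i) := by
  rw [dihOmega, if_neg (by omega), if_neg (by omega), if_pos ⟨rfl, hin⟩]

theorem dihOmega_of_mid {i j : ℕ} (hi : 1 ≤ i) (hin : i ≤ n) (hj : 1 ≤ j) (hjn : j ≤ n) :
    dihOmega m n i j = T ((m : ℤ) + |(i : ℤ) - j|) + T ((m : ℤ) + i + j) + T (2 * m - i - j) +
      T (2 * m - |(i : ℤ) - j|) := by
  rw [dihOmega, if_neg (by omega), if_neg (by omega), if_neg (by omega), if_pos ⟨hin, hjn⟩]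

theorem dihPMatrix_mul_mul_transpose_apply_last (i : Fin (n + 2)) :
    (dihPMatrix m n * dihLambdaMatrix m n * (dihPMatrix m n)ᵀ) i (Fin.last (n + 1)) =
      dihOmegaMatrix m n i (Fin.last (n + 1)) := by
  rw [mul_mul_transpose_apply, dihPMatrix_row_last, dihLambdaMatrix_mulVec_single_last,
    dotProduct_single]
  simp [dihPMatrix, dihOmegaMatrix, dihOmega_last_right]

theorem dihPMatrix_mul_mul_transpose_last_apply (j : Fin (n + 2)) :
    (dihPMatrix m n * dihLambdaMatrix m n * (dihPMatrix m n)ᵀ) (Fin.last (n + 1)) j =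
      dihOmegaMatrix m n (Fin.last (n + 1)) j := by
  rw [mul_mul_transpose_apply, dihPMatrix_row_last, single_dotProduct,
    dihLambdaMatrix_mulVec_apply_last]
  simp [dihPMatrix, dihOmegaMatrix, dihOmega_last_left]

theorem dihPMatrix_mul_mul_transpose_apply_zero_zero (hn : 1 ≤ n) :
    (dihPMatrix m n * dihLambdaMatrix m n * (dihPMatrix m n)ᵀ) 0 0 = dihOmegaMatrix m n 0 0 := by
  rw [mul_mul_transpose_apply, dihPMatrix_row_zero m hn]
  simp (disch := omega) only [add_dotProduct, single_dotProduct, mulVec, dotProduct_add,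
    dotProduct_single, dihLambdaMatrix, dihOmegaMatrix, of_apply, Fin.val_zero, Fin.val_one,
    Fin.val_last, dihLambda_zero_zero, dihLambda_of_mid, dihLambda_eq_zero_of_ne,
    dihLambda_last_last, dihOmega_zero_zero]
  simp only [mul_add, mul_sub, sub_mul, ← T_add, one_mul, mul_one, add_zero, zero_add]
  ring_nf
  rw [T_zero]
  ring

theorem dihPMatrix_mul_mul_transpose_apply_zero_of_mid (hn : 1 ≤ n) {j : Fin (n + 2)}
    (hj : 1 ≤ (j : ℕ)) (hjn : (j : ℕ) ≤ n) :
    (dihPMatrix m n * dihLambdaMatrix m n * (dihPMatrix m n)ᵀ) 0 j = dihOmegaMatrix m n 0 j := by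
  rw [mul_mul_transpose_apply, dihPMatrix_row_zero m hn, dihPMatrix_row_of_mid m hj hjn]
  simp (disch := omega) only [add_dotProduct, single_dotProduct, mulVec, dotProduct_add,
    dotProduct_single, dihLambdaMatrix, dihOmegaMatrix, of_apply, Fin.val_zero, Fin.val_one,
    Fin.val_last, dihLambda_of_mid, dihLambda_eq_zero_of_ne, dihLambda_last_last,
    dihOmega_zero_of_mid]
  rw [abs_of_nonpos (by omega)]
  simp only [mul_add, add_mul, mul_sub, sub_mul, ← T_add, one_mul, mul_one, mul_zero, zero_mul,
    add_zero, zero_add]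
  ring_nf

theorem dihPMatrix_mul_mul_transpose_apply_of_mid_zero (hn : 1 ≤ n) {i : Fin (n + 2)}
    (hi : 1 ≤ (i : ℕ)) (hin : (i : ℕ) ≤ n) :
    (dihPMatrix m n * dihLambdaMatrix m n * (dihPMatrix m n)ᵀ) i 0 = dihOmegaMatrix m n i 0 := by
  rw [mul_mul_transpose_apply, dihPMatrix_row_zero m hn, dihPMatrix_row_of_mid m hi hin]
  simp (disch := omega) only [add_dotProduct, single_dotProduct, mulVec, dotProduct_add,
    dotProduct_single, dihLambdaMatrix, dihOmegaMatrix, of_apply, Fin.val_zero, Fin.val_one,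
    Fin.val_last, dihLambda_of_mid, dihLambda_eq_zero_of_ne, dihLambda_last_last,
    dihOmega_of_mid_zero]
  rw [abs_of_nonneg (by omega)]
  simp only [mul_add, mul_sub, sub_mul, ← T_add, mul_one, add_zero, zero_add]
  ring_nf

theorem dihPMatrix_mul_mul_transpose_apply_of_mid {i j : Fin (n + 2)} (hi : 1 ≤ (i : ℕ))
    (hin : (i : ℕ) ≤ n) (hj : 1 ≤ (j : ℕ)) (hjn : (j : ℕ) ≤ n) :
    (dihPMatrix m n * dihLambdaMatrix m n * (dihPMatrix m n)ᵀ) i j = dihOmegaMatrix m n i j := by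
  rw [mul_mul_transpose_apply, dihPMatrix_row_of_mid m hi hin, dihPMatrix_row_of_mid m hj hjn]
  simp (disch := omega) only [add_dotProduct, single_dotProduct, mulVec, dotProduct_add,
    dotProduct_single, dihLambdaMatrix, dihOmegaMatrix, of_apply, Fin.val_last, dihLambda_of_mid,
    dihLambda_eq_zero_of_ne, dihLambda_last_last, dihOmega_of_mid]
  rcases abs_choice ((i : ℤ) - j) with h | h <;> rw [h] <;>
    simp only [mul_add, add_mul, mul_sub, sub_mul, ← T_add, one_mul, mul_one, zero_mul,
      add_zero, zero_add] <;>
    ring_nf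

theorem dihPMatrix_mul_dihLambdaMatrix_mul_transpose (hn : 1 ≤ n) :
    dihPMatrix m n * dihLambdaMatrix m n * (dihPMatrix m n)ᵀ = dihOmegaMatrix m n := by
  refine Matrix.ext fun i j => ?_
  obtain rfl | hj := eq_or_ne j (Fin.last (n + 1))
  · exact dihPMatrix_mul_mul_transpose_apply_last m i
  obtain rfl | hi := eq_or_ne i (Fin.last (n + 1))
  · exact dihPMatrix_mul_mul_transpose_last_apply m j
  have hin : (i : ℕ) ≤ n := Nat.lt_succ_iff.1 (Fin.val_lt_last hi)
  have hjn : (j : ℕ) ≤ n := Nat.lt_succ_iff.1 (Fin.val_lt_last hj)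
  obtain rfl | hi0 := eq_or_ne i 0 <;> obtain rfl | hj0 := eq_or_ne j 0
  · exact dihPMatrix_mul_mul_transpose_apply_zero_zero m hn
  · exact dihPMatrix_mul_mul_transpose_apply_zero_of_mid m hn (Fin.pos_iff_ne_zero.2 hj0) hjn
  · exact dihPMatrix_mul_mul_transpose_apply_of_mid_zero m hn (Fin.pos_iff_ne_zero.2 hi0) hin
  · exact dihPMatrix_mul_mul_transpose_apply_of_mid m (Fin.pos_iff_ne_zero.2 hi0) hin
      (Fin.pos_iff_ne_zero.2 hj0) hjn

end

theorem green_functions_odd_dihedral_general (m : ℕ) (hm3 : 3 ≤ m) :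
    letI n := (m - 1) / 2
    letI Ω : Matrix (Fin (n + 2)) (Fin (n + 2)) (LaurentPolynomial ℤ) :=
      Matrix.of fun i j => dihOmega m n i.1 j.1
    letI P : Matrix (Fin (n + 2)) (Fin (n + 2)) (LaurentPolynomial ℤ) :=
      Matrix.of fun i j => dihP m n i.1 j.1
    letI Λ : Matrix (Fin (n + 2)) (Fin (n + 2)) (LaurentPolynomial ℤ) :=
      Matrix.of fun i j => dihLambda m n i.1 j.1
    P * Λ * P.transpose = Ω :=
  dihPMatrix_mul_dihLambdaMatrix_mul_transpose m (by omega)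

/-- For every odd `m ≥ 3`, the dihedral group `I₂(m)` admits a system of Green
functions with Springer representations `S = {χ₀, χ₁, ε}`: `P Λ Pᵀ = Ω`. -/
theorem green_functions_odd_dihedral (m : ℕ) (hm : Odd m) (hm3 : 3 ≤ m) :
    letI n := (m - 1) / 2
    letI Ω : Matrix (Fin (n + 2)) (Fin (n + 2)) (LaurentPolynomial ℤ) :=
      Matrix.of fun i j => dihOmega m n i.1 j.1
    letI P : Matrix (Fin (n + 2)) (Fin (n + 2)) (LaurentPolynomial ℤ) :=
      Matrix.of fun i j => dihP m n i.1 j.1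
    letI Λ : Matrix (Fin (n + 2)) (Fin (n + 2)) (LaurentPolynomial ℤ) :=
      Matrix.of fun i j => dihLambda m n i.1 j.1
    P * Λ * P.transpose = Ω :=
  green_functions_odd_dihedral_general m hm3
end
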